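/- arXiv:2309.08967 — 3 statements merged into one kernel-verified Lean document; each statement's English description precedes it below -/
import Mathlib

section
/- Let μ₀, ρ be probability measures on ℝ with finite second moment, and let α, b ∈ (0,1) with b + α ≤ 1 and α > 0. Set η = b/(1-α). Define μ_k = ((η + α^k(1-η))·id)_♯μ₀ ∗ ((1-α^k)(1-η)·id)_♯ρ and μ_∞ = (η·id)_♯μ₀ ∗ ((1-η)·id)_♯ρ. Then W₂(μ_k, μ_∞) ≤ α^k (1-η) [ (∫ x² dμ₀)^{1/2} + (∫ x² dρ)^{1/2} ], and in particular μ_k converges weakly in the 2-Wasserstein space to μ_∞ at an exponential rate. -/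
open MeasureTheory ProbabilityTheory ENNReal Filter Topology

/-!
Couple `μ k` and `μlim` synchronously: draw `(X, R) ∼ μ₀ ⊗ ρ` and take
`((η + αᵏ(1-η)) X + (1-αᵏ)(1-η) R, η X + (1-η) R)`. The two coordinates differ by
`αᵏ(1-η) (X - R)`, so Minkowski's inequality in `L²(μ₀ ⊗ ρ)` bounds the coupling cost by
`αᵏ(1-η) (‖X‖₂ + ‖R‖₂)`.
-/

/-- The 2-Wasserstein distance between two measures on `ℝ`, as the infimum over all
couplings `γ` of `μ` and `ν` of `(∫ |x - y|² dγ)^(1/2)`, valued in `ℝ≥0∞`. -/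
noncomputable def W2 (μ ν : Measure ℝ) : ℝ≥0∞ :=
  ⨅ γ ∈ {γ : Measure (ℝ × ℝ) |
      γ.map Prod.fst = μ ∧ γ.map Prod.snd = ν},
    (∫⁻ p : ℝ × ℝ, ENNReal.ofReal ((p.1 - p.2) ^ 2) ∂γ) ^ (1 / 2 : ℝ)

lemma W2_le_eLpNorm_sub {μ ν : Measure ℝ} (γ : Measure (ℝ × ℝ))
    (hfst : γ.map Prod.fst = μ) (hsnd : γ.map Prod.snd = ν) :
    W2 μ ν ≤ eLpNorm (fun p : ℝ × ℝ => p.1 - p.2) 2 γ := by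
  refine (iInf₂_le γ ⟨hfst, hsnd⟩).trans_eq ?_
  rw [eLpNorm_eq_lintegral_rpow_enorm_toReal two_ne_zero ofNat_ne_top, toReal_ofNat]
  congr 1
  refine lintegral_congr fun p => ?_
  rw [Real.enorm_eq_ofReal_abs, rpow_two, ← ofReal_pow (abs_nonneg _), sq_abs]

lemma map_prod_linear_eq_conv (μ ν : Measure ℝ) [SFinite μ] [SFinite ν] (a c : ℝ) :
    (μ.prod ν).map (fun p => a * p.1 + c * p.2) = (μ.map (a * ·)).conv (ν.map (c * ·)) := by
  rw [Measure.conv, Measure.map_prod_map _ _ (by fun_prop) (by fun_prop),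
    Measure.map_map (by fun_prop) (by fun_prop)]
  rfl

lemma eLpNorm_id_two_eq_sqrt_integral_sq {μ : Measure ℝ} (h : Integrable (fun x => x ^ 2) μ) :
    eLpNorm id 2 μ = ENNReal.ofReal (Real.sqrt (∫ x, x ^ 2 ∂μ)) := by
  rw [((memLp_two_iff_integrable_sq aestronglyMeasurable_id).2 h).eLpNorm_eq_integral_rpow_norm
    two_ne_zero ofNat_ne_top, toReal_ofNat, Real.sqrt_eq_rpow]
  simp [one_div]

lemma W2_conv_map_mul_le (μ ν : Measure ℝ) [IsProbabilityMeasure μ] [IsProbabilityMeasure ν]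
    (a c a' c' : ℝ) :
    W2 ((μ.map (a * ·)).conv (ν.map (c * ·))) ((μ.map (a' * ·)).conv (ν.map (c' * ·))) ≤
      ‖a - a'‖ₑ * eLpNorm id 2 μ + ‖c - c'‖ₑ * eLpNorm id 2 ν := by
  set T : ℝ × ℝ → ℝ × ℝ := fun p => (a * p.1 + c * p.2, a' * p.1 + c' * p.2)
  have hT : Measurable T := by fun_prop
  calc _ ≤ eLpNorm (fun p : ℝ × ℝ => p.1 - p.2) 2 ((μ.prod ν).map T) := by
        refine W2_le_eLpNorm_sub _ ?_ ?_ <;>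
          rw [Measure.map_map (by fun_prop) hT, ← map_prod_linear_eq_conv] <;> rfl
    _ = eLpNorm ((a - a') • Prod.fst + (c - c') • Prod.snd : ℝ × ℝ → ℝ) 2 (μ.prod ν) := by
        rw [eLpNorm_map_measure (by fun_prop) hT.aemeasurable]
        congr 1
        funext p
        simp only [T, Function.comp_apply, Pi.add_apply, Pi.smul_apply, smul_eq_mul]
        ring
    _ ≤ _ := by
        refine (eLpNorm_add_le (by fun_prop) (by fun_prop) one_le_two).trans_eq ?_
        rw [eLpNorm_const_smul, eLpNorm_const_smul,
          ← eLpNorm_comp_measurePreserving aestronglyMeasurable_id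
            (measurePreserving_fst (μ := μ) (ν := ν)),
          ← eLpNorm_comp_measurePreserving aestronglyMeasurable_id
            (measurePreserving_snd (μ := μ) (ν := ν))]
        rfl

theorem stmt_6_general (μ₀ ρ : Measure ℝ) [IsProbabilityMeasure μ₀] [IsProbabilityMeasure ρ]
    (hμ₀ : Integrable (fun x => x ^ 2) μ₀) (hρ : Integrable (fun x => x ^ 2) ρ)
    (α b : ℝ) (hα : α ∈ Set.Ioo (0 : ℝ) 1)
    (hba : b + α ≤ 1) (η : ℝ) (hη : η = b / (1 - α))
    (μ : ℕ → Measure ℝ)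
    (hμ : ∀ k, μ k = (μ₀.map (fun x => (η + α ^ k * (1 - η)) * x)).conv
        (ρ.map (fun x => (1 - α ^ k) * (1 - η) * x)))
    (μlim : Measure ℝ)
    (hmulim : μlim = (μ₀.map (fun x => η * x)).conv (ρ.map (fun x => (1 - η) * x))) :
    (∀ k, W2 (μ k) μlim ≤
      ENNReal.ofReal (α ^ k * (1 - η) *
        (Real.sqrt (∫ x, x ^ 2 ∂μ₀) + Real.sqrt (∫ x, x ^ 2 ∂ρ)))) ∧
    Tendsto (fun k => W2 (μ k) μlim) atTop (𝓝 0) := by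
  obtain ⟨hα0, hα1⟩ := hα
  have hη1 : 0 ≤ 1 - η := by
    rw [hη, sub_nonneg, div_le_one (by linarith)]; linarith
  have hrate : ∀ k : ℕ, 0 ≤ α ^ k * (1 - η) := fun k => by positivity
  set S := Real.sqrt (∫ x, x ^ 2 ∂μ₀) + Real.sqrt (∫ x, x ^ 2 ∂ρ)
  have hbound : ∀ k, W2 (μ k) μlim ≤ ENNReal.ofReal (α ^ k * (1 - η) * S) := by
    intro k
    rw [hμ k, hmulim]
    refine (W2_conv_map_mul_le μ₀ ρ _ _ _ _).trans_eq ?_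
    rw [eLpNorm_id_two_eq_sqrt_integral_sq hμ₀, eLpNorm_id_two_eq_sqrt_integral_sq hρ,
      Real.enorm_eq_ofReal_abs, Real.enorm_eq_ofReal_abs,
      show η + α ^ k * (1 - η) - η = α ^ k * (1 - η) by ring,
      show (1 - α ^ k) * (1 - η) - (1 - η) = -(α ^ k * (1 - η)) by ring, abs_neg,
      abs_of_nonneg (hrate k), ← ofReal_mul (hrate k), ← ofReal_mul (hrate k),
      ← ofReal_add (by positivity) (by positivity), mul_add]
  refine ⟨hbound, tendsto_of_tendsto_of_tendsto_of_le_of_le tendsto_const_nhds ?_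
    (fun k => zero_le) hbound⟩
  simpa [mul_assoc] using ENNReal.tendsto_ofReal
    ((tendsto_pow_atTop_nhds_zero_of_lt_one hα0.le hα1).mul_const ((1 - η) * S))

theorem stmt_6 (μ₀ ρ : Measure ℝ) [IsProbabilityMeasure μ₀] [IsProbabilityMeasure ρ]
    (hμ₀ : Integrable (fun x => x ^ 2) μ₀) (hρ : Integrable (fun x => x ^ 2) ρ)
    (α b : ℝ) (hα : α ∈ Set.Ioo (0 : ℝ) 1) (hb : b ∈ Set.Ioo (0 : ℝ) 1)
    (hba : b + α ≤ 1) (η : ℝ) (hη : η = b / (1 - α))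
    (μ : ℕ → Measure ℝ)
    (hμ : ∀ k, μ k = (μ₀.map (fun x => (η + α ^ k * (1 - η)) * x)).conv
        (ρ.map (fun x => (1 - α ^ k) * (1 - η) * x)))
    (μlim : Measure ℝ)
    (hmulim : μlim = (μ₀.map (fun x => η * x)).conv (ρ.map (fun x => (1 - η) * x))) :
    (∀ k, W2 (μ k) μlim ≤
      ENNReal.ofReal (α ^ k * (1 - η) *
        (Real.sqrt (∫ x, x ^ 2 ∂μ₀) + Real.sqrt (∫ x, x ^ 2 ∂ρ)))) ∧
    Tendsto (fun k => W2 (μ k) μlim) atTop (𝓝 0) :=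
  stmt_6_general μ₀ ρ hμ₀ hρ α b hα hba η hη μ hμ μlim hmulim
end

section
/- Let ρ be a probability measure on ℝ with finite second moment, α ∈ (0,1), and for k ≥ 1 define ρ_k = ∗_{l=0}^{k-1} (α^{k-1-l}(1-α)·id)_♯ρ (the convolution of the pushforwards of ρ under the scalings α^{k-1-l}(1-α)). If ρ has mean 0, then for all m > n ≥ 1, W₂(ρ_n, ρ_m)² ≤ 2 (1-α)² (α^{2n} - α^{2m})/(1 - α²) · ∫ x² dρ(x). In particular, (ρ_k) is a Cauchy sequence in the 2-Wasserstein metric. -/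
open MeasureTheory ProbabilityTheory ENNReal Filter Topology

/-- Iterated convolution: `iterConv f k = f 0 ∗ f 1 ∗ ⋯ ∗ f (k-1)` (with `δ₀` for `k = 0`). -/
noncomputable def iterConv (f : ℕ → Measure ℝ) : ℕ → Measure ℝ
  | 0 => Measure.dirac 0
  | (k + 1) => (iterConv f k).conv (f k)

/-!
For `n ≤ m` the last `n` factors of `ρₘ` are exactly those of `ρₙ`, so `ρₘ = ν ∗ ρₙ` with `ν`
the convolution of the first `m - n` factors. Coupling `ρₙ` with `ν ∗ ρₙ` through
`(x, y) ↦ (y, x + y)` gives `W₂(ρₙ, ρₘ)² ≤ ∫ x² dν`. The factors are centred, so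
`∫ x² dν = Var ν` is the sum of their variances, the geometric sum
`(1 - α)² (α²ⁿ - α²ᵐ) / (1 - α²) · ∫ x² dρ`. As this is at most a constant times `α²ⁿ`, the
sequence is Cauchy.
-/

namespace MeasureTheory.Measure

variable {μ ν : Measure ℝ} [IsProbabilityMeasure μ] [IsProbabilityMeasure ν]

lemma memLp_id_conv (hμ : MemLp id 2 μ) (hν : MemLp id 2 ν) : MemLp id 2 (μ ∗ ν) := by
  rw [conv, memLp_map_measure_iff aestronglyMeasurable_id (by fun_prop)]
  exact (hμ.comp_fst ν).add (hν.comp_snd μ)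

lemma integral_id_conv (hμ : Integrable id μ) (hν : Integrable id ν) :
    ∫ x, x ∂(μ ∗ ν) = ∫ x, x ∂μ + ∫ x, x ∂ν := by
  have h₁ : Integrable (fun p : ℝ × ℝ => p.1) (μ.prod ν) := hμ.comp_fst ν
  have h₂ : Integrable (fun p : ℝ × ℝ => p.2) (μ.prod ν) := hν.comp_snd μ
  rw [conv, integral_map (f := fun x : ℝ => x) (by fun_prop) aestronglyMeasurable_id,
    integral_add h₁ h₂, integral_fun_fst (fun x : ℝ => x), integral_fun_snd (fun x : ℝ => x)]
  simp

lemma variance_id_conv (hμ : MemLp id 2 μ) (hν : MemLp id 2 ν) :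
    Var[id; μ ∗ ν] = Var[id; μ] + Var[id; ν] := by
  rw [conv, variance_id_map (by fun_prop : Measurable fun p : ℝ × ℝ => p.1 + p.2).aemeasurable]
  exact variance_add_prod (X := id) (Y := id) hμ hν

end MeasureTheory.Measure

lemma W2_le_of_coupling {μ ν : Measure ℝ} (γ : Measure (ℝ × ℝ))
    (h₁ : γ.map Prod.fst = μ) (h₂ : γ.map Prod.snd = ν) :
    W2 μ ν ≤ (∫⁻ p, ENNReal.ofReal ((p.1 - p.2) ^ 2) ∂γ) ^ (1 / 2 : ℝ) :=
  iInf₂_le γ ⟨h₁, h₂⟩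

lemma W2_sq_le_of_coupling {μ ν : Measure ℝ} (γ : Measure (ℝ × ℝ))
    (h₁ : γ.map Prod.fst = μ) (h₂ : γ.map Prod.snd = ν) :
    W2 μ ν ^ 2 ≤ ∫⁻ p, ENNReal.ofReal ((p.1 - p.2) ^ 2) ∂γ := by
  have h := W2_le_of_coupling γ h₁ h₂
  rwa [one_div, ENNReal.le_rpow_inv_iff two_pos, ENNReal.rpow_two] at h

lemma W2_comm (μ ν : Measure ℝ) : W2 μ ν = W2 ν μ := by
  suffices ∀ μ ν : Measure ℝ, W2 ν μ ≤ W2 μ ν from le_antisymm (this ν μ) (this μ ν)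
  intro μ ν
  refine le_iInf₂ fun γ ⟨h₁, h₂⟩ => ?_
  refine (W2_le_of_coupling (γ.map Prod.swap) ?_ ?_).trans_eq ?_
  · rwa [Measure.map_map measurable_fst measurable_swap]
  · rwa [Measure.map_map measurable_snd measurable_swap]
  · rw [lintegral_map (by fun_prop) measurable_swap]
    congr 1
    refine lintegral_congr fun p => ?_
    rw [Prod.fst_swap, Prod.snd_swap, ← neg_sub, neg_sq]

lemma W2_conv_sq_le (μ ν : Measure ℝ) [IsProbabilityMeasure μ] [IsProbabilityMeasure ν] :
    W2 μ (ν ∗ μ) ^ 2 ≤ ∫⁻ x, ENNReal.ofReal (x ^ 2) ∂ν := by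
  have hT : Measurable fun p : ℝ × ℝ => (p.2, p.1 + p.2) := by fun_prop
  refine (W2_sq_le_of_coupling ((ν.prod μ).map fun p => (p.2, p.1 + p.2)) ?_ ?_).trans_eq ?_
  · rw [Measure.map_map measurable_fst hT]
    exact Measure.map_snd_prod.trans (by simp)
  · rw [Measure.map_map measurable_snd hT]; rfl
  · rw [lintegral_map (by fun_prop) hT, lintegral_prod _ (by fun_prop)]
    simp

section iterConv

variable (f : ℕ → Measure ℝ) [∀ k, IsProbabilityMeasure (f k)]

instance isProbabilityMeasure_iterConv (k : ℕ) : IsProbabilityMeasure (iterConv f k) := by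
  induction k with
  | zero => exact Measure.dirac.isProbabilityMeasure
  | succ k ih => exact Measure.probabilitymeasure_of_probabilitymeasures_conv _ _

lemma iterConv_add (a b : ℕ) :
    iterConv f (a + b) = iterConv f a ∗ iterConv (fun j => f (a + j)) b := by
  induction b with
  | zero => exact (Measure.conv_dirac_zero _).symm
  | succ b ih => rw [← add_assoc, iterConv, ih, iterConv, Measure.conv_assoc]

variable {f}

lemma memLp_id_iterConv (hf : ∀ k, MemLp id 2 (f k)) (k : ℕ) : MemLp id 2 (iterConv f k) := by
  induction k with
  | zero => exact ⟨aestronglyMeasurable_id, by simp [iterConv, eLpNorm_dirac _ _ two_ne_zero]⟩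
  | succ k ih => exact Measure.memLp_id_conv ih (hf k)

lemma integral_id_iterConv (hf : ∀ k, MemLp id 2 (f k)) (k : ℕ) :
    ∫ x, x ∂(iterConv f k) = ∑ l ∈ Finset.range k, ∫ x, x ∂(f l) := by
  induction k with
  | zero => simp [iterConv]
  | succ k ih =>
    rw [iterConv, Measure.integral_id_conv ((memLp_id_iterConv hf k).integrable one_le_two)
      ((hf k).integrable one_le_two), ih, Finset.sum_range_succ]

lemma variance_id_iterConv (hf : ∀ k, MemLp id 2 (f k)) (k : ℕ) :
    Var[id; iterConv f k] = ∑ l ∈ Finset.range k, Var[id; f l] := by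
  induction k with
  | zero => simp [iterConv]
  | succ k ih =>
    rw [iterConv, Measure.variance_id_conv (memLp_id_iterConv hf k) (hf k), ih,
      Finset.sum_range_succ]

end iterConv

section scaling

instance isProbabilityMeasure_map_const_mul (ρ : Measure ℝ) [IsProbabilityMeasure ρ] (c : ℝ) :
    IsProbabilityMeasure (ρ.map (c * ·)) :=
  Measure.isProbabilityMeasure_map (by fun_prop)

variable {ρ : Measure ℝ} (c : ℝ)

lemma memLp_id_map_const_mul (hρ : MemLp id 2 ρ) : MemLp id 2 (ρ.map (c * ·)) := by
  rw [memLp_map_measure_iff aestronglyMeasurable_id (by fun_prop)]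
  exact hρ.const_mul c

lemma integral_id_map_const_mul : ∫ x, x ∂(ρ.map (c * ·)) = c * ∫ x, x ∂ρ := by
  rw [integral_map (f := fun x : ℝ => x) (by fun_prop) aestronglyMeasurable_id,
    integral_const_mul]

lemma variance_id_map_const_mul : Var[id; ρ.map (c * ·)] = c ^ 2 * Var[id; ρ] := by
  rw [variance_id_map (by fun_prop)]
  exact variance_const_mul c id ρ

end scaling

lemma lintegral_sq_eq_ofReal_variance {ν : Measure ℝ} [IsFiniteMeasure ν] (hν : MemLp id 2 ν)
    (hmean : ∫ x, x ∂ν = 0) : ∫⁻ x, ENNReal.ofReal (x ^ 2) ∂ν = ENNReal.ofReal Var[id; ν] := by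
  rw [ofReal_variance hν, evariance_eq_lintegral_ofReal]
  simp [hmean]

lemma W2_conv_sq_le_variance (μ : Measure ℝ) {ν : Measure ℝ} [IsProbabilityMeasure μ]
    [IsProbabilityMeasure ν] (hν : MemLp id 2 ν) (hmean : ∫ x, x ∂ν = 0) :
    W2 μ (ν ∗ μ) ^ 2 ≤ ENNReal.ofReal Var[id; ν] :=
  (W2_conv_sq_le μ ν).trans_eq (lintegral_sq_eq_ofReal_variance hν hmean)

lemma sum_range_pow_sub_one_sub {K : Type*} [Field K] {r : K} (hr : r ≠ 1) {n m : ℕ}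
    (hnm : n ≤ m) :
    ∑ l ∈ Finset.range (m - n), r ^ (m - 1 - l) = (r ^ n - r ^ m) / (1 - r) := by
  rw [← geom_sum_Ico' hr hnm, Finset.sum_Ico_eq_sum_range, ← Finset.sum_range_reflect]
  refine Finset.sum_congr rfl fun l hl => ?_
  rw [Finset.mem_range] at hl
  congr 1
  omega

-- The paper's `ρₖ = ∗_{l < k} (αᵏ⁻¹⁻ˡ (1 - α) · id)₊ ρ`.
noncomputable def geomScaledConv (ρ : Measure ℝ) (α : ℝ) (k : ℕ) : Measure ℝ :=
  iterConv (fun l => ρ.map fun x => α ^ (k - 1 - l) * (1 - α) * x) k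

instance isProbabilityMeasure_geomScaledConv (ρ : Measure ℝ) [IsProbabilityMeasure ρ] (α : ℝ)
    (k : ℕ) :
    IsProbabilityMeasure (geomScaledConv ρ α k) :=
  isProbabilityMeasure_iterConv _ k

lemma geomScaledConv_eq_conv (ρ : Measure ℝ) [IsProbabilityMeasure ρ] (α : ℝ) {n m : ℕ}
    (hnm : n ≤ m) :
    geomScaledConv ρ α m =
      iterConv (fun l => ρ.map fun x => α ^ (m - 1 - l) * (1 - α) * x) (m - n) ∗
        geomScaledConv ρ α n := by
  obtain ⟨d, rfl⟩ := Nat.exists_eq_add_of_le' hnm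
  have hshift (j : ℕ) : d + n - 1 - (d + j) = n - 1 - j := by omega
  rw [geomScaledConv, iterConv_add, Nat.add_sub_cancel, geomScaledConv]
  simp only [hshift]

theorem W2_geomScaledConv_sq_le (ρ : Measure ℝ) [IsProbabilityMeasure ρ] (hρ : MemLp id 2 ρ)
    (hmean : ∫ x, x ∂ρ = 0) {α : ℝ} (hα : α ^ 2 ≠ 1) {n m : ℕ} (hnm : n ≤ m) :
    W2 (geomScaledConv ρ α n) (geomScaledConv ρ α m) ^ 2 ≤
      ENNReal.ofReal ((1 - α) ^ 2 * (α ^ (2 * n) - α ^ (2 * m)) / (1 - α ^ 2) * Var[id; ρ]) := by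
  have hf (l : ℕ) : MemLp id 2 (ρ.map fun x => α ^ (m - 1 - l) * (1 - α) * x) :=
    memLp_id_map_const_mul _ hρ
  rw [geomScaledConv_eq_conv ρ α hnm]
  refine (W2_conv_sq_le_variance _ (memLp_id_iterConv hf _) ?_).trans_eq ?_
  · rw [integral_id_iterConv hf]
    exact Finset.sum_eq_zero fun l _ => by rw [integral_id_map_const_mul, hmean, mul_zero]
  · congr 1
    calc Var[id; iterConv (fun l => ρ.map fun x => α ^ (m - 1 - l) * (1 - α) * x) (m - n)]
        = (1 - α) ^ 2 * (∑ l ∈ Finset.range (m - n), (α ^ 2) ^ (m - 1 - l)) * Var[id; ρ] := by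
          rw [variance_id_iterConv hf, Finset.mul_sum, Finset.sum_mul]
          refine Finset.sum_congr rfl fun l _ => ?_
          rw [variance_id_map_const_mul]
          ring
      _ = _ := by
          rw [sum_range_pow_sub_one_sub hα hnm, pow_mul, pow_mul]
          ring

lemma exists_forall_W2_lt_of_sq_le {ν : ℕ → Measure ℝ} {b : ℕ → ℝ≥0∞}
    (hb : Tendsto b atTop (𝓝 0)) (h : ∀ n m, n ≤ m → W2 (ν n) (ν m) ^ 2 ≤ b n) {ε : ℝ≥0∞}
    (hε : 0 < ε) : ∃ N, ∀ m n, N ≤ n → N ≤ m → W2 (ν n) (ν m) < ε := by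
  obtain ⟨N, hN⟩ := (hb.eventually_lt_const (ENNReal.pow_pos hε 2)).exists_forall_of_atTop
  have hlt (n m : ℕ) (hn : N ≤ n) (hnm : n ≤ m) : W2 (ν n) (ν m) < ε :=
    lt_of_pow_lt_pow_left' 2 ((h n m hnm).trans_lt (hN n hn))
  refine ⟨N, fun m n hn hm => ?_⟩
  rcases le_total n m with hnm | hmn
  · exact hlt n m hn hnm
  · exact W2_comm (ν n) (ν m) ▸ hlt m n hm hmn

theorem stmt_9 (ρ : Measure ℝ) [IsProbabilityMeasure ρ]
    (hρ : Integrable (fun x => x ^ 2) ρ) (hmean : ∫ x, x ∂ρ = 0)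
    (α : ℝ) (hα : α ∈ Set.Ioo (0 : ℝ) 1)
    (ρk : ℕ → Measure ℝ)
    (hρk : ∀ k, ρk k = iterConv (fun l => ρ.map (fun x => α ^ (k - 1 - l) * (1 - α) * x)) k) :
    (∀ m n, 1 ≤ n → n < m →
      W2 (ρk n) (ρk m) ^ 2 ≤
        ENNReal.ofReal (2 * (1 - α) ^ 2 * (α ^ (2 * n) - α ^ (2 * m)) / (1 - α ^ 2) *
          ∫ x, x ^ 2 ∂ρ)) ∧
    (∀ ε : ℝ≥0∞, 0 < ε → ∃ N : ℕ, ∀ m n, N ≤ n → N ≤ m → W2 (ρk n) (ρk m) < ε) := by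
  obtain ⟨hα₀, hα₁⟩ := hα
  obtain rfl : ρk = geomScaledConv ρ α := funext hρk
  have hρ₂ : MemLp id 2 ρ := (memLp_two_iff_integrable_sq aestronglyMeasurable_id).2 hρ
  have hα₂ : α ^ 2 < 1 := by nlinarith
  have hvar : Var[id; ρ] = ∫ x, x ^ 2 ∂ρ := variance_of_integral_eq_zero aemeasurable_id hmean
  have hbound (n m : ℕ) (hnm : n ≤ m) := W2_geomScaledConv_sq_le ρ hρ₂ hmean hα₂.ne hnm
  simp only [hvar] at hbound
  refine ⟨fun m n _ hnm => (hbound n m hnm.le).trans (ENNReal.ofReal_le_ofReal ?_),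
    fun ε hε => exists_forall_W2_lt_of_sq_le
      (b := fun n => ENNReal.ofReal ((1 - α) ^ 2 * α ^ (2 * n) / (1 - α ^ 2) * ∫ x, x ^ 2 ∂ρ))
      ?_ (fun n m hnm => (hbound n m hnm).trans (ENNReal.ofReal_le_ofReal ?_)) hε⟩
  · have hD : 0 ≤ α ^ (2 * n) - α ^ (2 * m) :=
      sub_nonneg.2 (pow_le_pow_of_le_one hα₀.le hα₁.le (by omega))
    gcongr
    exact le_mul_of_one_le_left (sq_nonneg _) one_le_two
  · have h := tendsto_pow_atTop_nhds_zero_of_lt_one (sq_nonneg α) hα₂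
    have := ((h.const_mul ((1 - α) ^ 2)).div_const (1 - α ^ 2)).mul_const (∫ x, x ^ 2 ∂ρ)
    simpa [pow_mul] using ENNReal.tendsto_ofReal this
  · gcongr
    exact sub_le_self _ (by positivity)
end

section
/- Let μ and ν be Gaussian probability measures on ℝ with means m_μ, m_ν and variances σ_μ², σ_ν². Then W₂(μ, ν)² = |m_μ - m_ν|² + |σ_μ - σ_ν|². -/
open MeasureTheory ProbabilityTheory ENNReal Filter Topology

def couplings (μ ν : Measure ℝ) : Set (Measure (ℝ × ℝ)) :=
  {γ | γ.map Prod.fst = μ ∧ γ.map Prod.snd = ν}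

lemma W2_sq (μ ν : Measure ℝ) :
    W2 μ ν ^ 2 =
      ⨅ γ ∈ couplings μ ν, ∫⁻ p : ℝ × ℝ, ENNReal.ofReal ((p.1 - p.2) ^ 2) ∂γ := by
  have h : W2 μ ν = orderIsoRpow (1 / 2) (by norm_num)
      (⨅ γ ∈ couplings μ ν, ∫⁻ p : ℝ × ℝ, ENNReal.ofReal ((p.1 - p.2) ^ 2) ∂γ) := by
    rw [OrderIso.map_iInf₂]
    rfl
  rw [h, orderIsoRpow_apply, ← rpow_natCast, ← rpow_mul]
  norm_num

section Moments

variable {Ω : Type*} {mΩ : MeasurableSpace Ω} {P : Measure Ω} {X Y : Ω → ℝ}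

lemma sq_covariance_le_variance_mul [IsFiniteMeasure P] (hX : MemLp X 2 P) (hY : MemLp Y 2 P) :
    cov[X, Y; P] ^ 2 ≤ Var[X; P] * Var[Y; P] := by
  have hquad : ∀ t : ℝ, 0 ≤ Var[X; P] * (t * t) + (-2 * cov[X, Y; P]) * t + Var[Y; P] := by
    intro t
    have h := variance_nonneg (t • X - Y) P
    rw [variance_sub (hX.const_smul t) hY, variance_smul, covariance_smul_left] at h
    linarith
  have h := discrim_le_zero hquad
  rw [discrim] at h
  nlinarith

lemma covariance_le_sqrt_variance_mul [IsFiniteMeasure P] (hX : MemLp X 2 P)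
    (hY : MemLp Y 2 P) : cov[X, Y; P] ≤ √Var[X; P] * √Var[Y; P] := by
  rw [← Real.sqrt_mul (variance_nonneg X P)]
  exact (le_abs_self _).trans (Real.abs_le_sqrt (sq_covariance_le_variance_mul hX hY))

lemma sq_sqrt_variance_sub_le_variance_sub [IsFiniteMeasure P] (hX : MemLp X 2 P)
    (hY : MemLp Y 2 P) : (√Var[X; P] - √Var[Y; P]) ^ 2 ≤ Var[X - Y; P] := by
  rw [variance_sub hX hY, sub_sq, Real.sq_sqrt (variance_nonneg X P),
    Real.sq_sqrt (variance_nonneg Y P)]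
  linarith [covariance_le_sqrt_variance_mul hX hY]

lemma sq_sub_integral_add_sq_sub_sqrt_variance_le [IsProbabilityMeasure P] (hX : MemLp X 2 P)
    (hY : MemLp Y 2 P) :
    (P[X] - P[Y]) ^ 2 + (√Var[X; P] - √Var[Y; P]) ^ 2 ≤ ∫ ω, (X ω - Y ω) ^ 2 ∂P := by
  have h := variance_eq_sub (hX.sub hY)
  simp only [Pi.pow_apply, Pi.sub_apply] at h
  rw [integral_sub (hX.integrable one_le_two) (hY.integrable one_le_two)] at h
  linarith [sq_sqrt_variance_sub_le_variance_sub hX hY]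

lemma ProbabilityTheory.HasLaw.memLp {μ : Measure ℝ} {p : ℝ≥0∞} (hX : HasLaw X μ P)
    (h : MemLp id p μ) : MemLp X p P := by
  rw [← hX.map_eq] at h
  exact (memLp_map_measure_iff aestronglyMeasurable_id hX.aemeasurable).mp h

end Moments

lemma ofReal_le_lintegral_of_mem_couplings {μ ν : Measure ℝ} [IsProbabilityMeasure μ]
    (hμ : MemLp id 2 μ) (hν : MemLp id 2 ν) {γ : Measure (ℝ × ℝ)} (hγ : γ ∈ couplings μ ν) :
    ENNReal.ofReal ((∫ x, x ∂μ - ∫ x, x ∂ν) ^ 2 + (√Var[id; μ] - √Var[id; ν]) ^ 2)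
      ≤ ∫⁻ p : ℝ × ℝ, ENNReal.ofReal ((p.1 - p.2) ^ 2) ∂γ := by
  have hfst : HasLaw Prod.fst μ γ := ⟨measurable_fst.aemeasurable, hγ.1⟩
  have hsnd : HasLaw Prod.snd ν γ := ⟨measurable_snd.aemeasurable, hγ.2⟩
  have : IsProbabilityMeasure γ := hfst.isProbabilityMeasure_iff.mpr ‹_›
  have hX := hfst.memLp hμ
  have hY := hsnd.memLp hν
  have hint : Integrable (fun p : ℝ × ℝ => (p.1 - p.2) ^ 2) γ := (hX.sub hY).integrable_sq
  rw [← ofReal_integral_eq_lintegral_ofReal hint (ae_of_all _ fun p => sq_nonneg _),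
    ← hfst.integral_eq, ← hsnd.integral_eq,
    ← hfst.variance_eq, ← hsnd.variance_eq]
  exact ENNReal.ofReal_le_ofReal (sq_sub_integral_add_sq_sub_sqrt_variance_le hX hY)

lemma hasLaw_const_mul_add_gaussianReal (a b : ℝ) :
    HasLaw (fun x => a * x + b) (gaussianReal b (.mk (a ^ 2) (sq_nonneg a)))
      (gaussianReal 0 1) := by
  simpa using
    gaussianReal_add_const (gaussianReal_const_mul (HasLaw.id (μ := gaussianReal 0 1)) a) b

lemma hasLaw_sqrt_mul_add_gaussianReal (m : ℝ) (v : NNReal) :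
    HasLaw (fun x => √v * x + m) (gaussianReal m v) (gaussianReal 0 1) := by
  convert hasLaw_const_mul_add_gaussianReal (√v) m
  ext
  simp

lemma lintegral_ofReal_sq_gaussianReal (m : ℝ) (v : NNReal) :
    ∫⁻ x, ENNReal.ofReal (x ^ 2) ∂gaussianReal m v = ENNReal.ofReal (m ^ 2 + v) := by
  have hint : Integrable (fun x => x ^ 2) (gaussianReal m v) :=
    (memLp_id_gaussianReal 2).integrable_sq
  have h := variance_eq_sub (memLp_id_gaussianReal (μ := m) (v := v) 2)
  simp only [variance_id_gaussianReal, id_eq, Pi.pow_apply, integral_id_gaussianReal] at h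
  rw [← ofReal_integral_eq_lintegral_ofReal hint (ae_of_all _ fun x => sq_nonneg x)]
  congr 1
  linarith

lemma exists_mem_couplings_gaussianReal_lintegral_eq (m₁ m₂ : ℝ) (v₁ v₂ : NNReal) :
    ∃ γ ∈ couplings (gaussianReal m₁ v₁) (gaussianReal m₂ v₂),
      ∫⁻ p : ℝ × ℝ, ENNReal.ofReal ((p.1 - p.2) ^ 2) ∂γ
        = ENNReal.ofReal ((m₁ - m₂) ^ 2 + (√v₁ - √v₂) ^ 2) := by
  set T : ℝ → ℝ × ℝ := fun x => (√v₁ * x + m₁, √v₂ * x + m₂)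
  have hT : Measurable T := by fun_prop
  refine ⟨(gaussianReal 0 1).map T, ⟨?_, ?_⟩, ?_⟩
  · rw [Measure.map_map measurable_fst hT]
    exact (hasLaw_sqrt_mul_add_gaussianReal m₁ v₁).map_eq
  · rw [Measure.map_map measurable_snd hT]
    exact (hasLaw_sqrt_mul_add_gaussianReal m₂ v₂).map_eq
  · have hdiff := hasLaw_const_mul_add_gaussianReal (√v₁ - √v₂) (m₁ - m₂)
    calc ∫⁻ p, ENNReal.ofReal ((p.1 - p.2) ^ 2) ∂(gaussianReal 0 1).map T
        = ∫⁻ x, ENNReal.ofReal (((√v₁ - √v₂) * x + (m₁ - m₂)) ^ 2) ∂gaussianReal 0 1 := by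
          rw [lintegral_map (by fun_prop) hT]
          congr with x
          simp only [T]
          ring_nf
      _ = _ := by
          rw [hdiff.lintegral_comp (f := fun y => ENNReal.ofReal (y ^ 2)) (by fun_prop),
            lintegral_ofReal_sq_gaussianReal]
          rfl

theorem stmt_13 (m₁ m₂ : ℝ) (v₁ v₂ : NNReal) :
    W2 (gaussianReal m₁ v₁) (gaussianReal m₂ v₂) ^ 2 =
      ENNReal.ofReal (|m₁ - m₂| ^ 2 + |Real.sqrt v₁ - Real.sqrt v₂| ^ 2) := by
  rw [W2_sq, sq_abs, sq_abs]
  obtain ⟨γ₀, hγ₀, hcost⟩ := exists_mem_couplings_gaussianReal_lintegral_eq m₁ m₂ v₁ v₂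
  refine le_antisymm (hcost ▸ iInf₂_le γ₀ hγ₀) (le_iInf₂ fun γ hγ => ?_)
  simpa using ofReal_le_lintegral_of_mem_couplings
    (memLp_id_gaussianReal 2) (memLp_id_gaussianReal 2) hγ
end
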